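/- arXiv:1811.04449 — 9 statements merged into one kernel-verified Lean document; each statement's English description precedes it below -/
import Mathlib

section
/- Let G be a finite simple graph and r a positive integer. If G contains r vertices x_1, …, x_r such that any two distinct ones are either in different connected components or at graph distance at least 2r−1, then no burning schedule of length at most r−1 burns G; equivalently, every burning of G requires at least r rounds. -/
/-- A burning schedule of length `m ≤ k` burns `G`: for every vertex `v` there is a
round `i` (`0`-indexed, corresponding to round `i+1`) whose activator `x i` reaches `v`
within distance `m - (i+1)`. -/
def BurnsIn {V : Type*} (G : SimpleGraph V) (k : ℕ) : Prop :=
  ∃ m, m ≤ k ∧ ∃ x : Fin m → V, ∀ v : V, ∃ i : Fin m,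
    G.Reachable (x i) v ∧ G.dist (x i) v ≤ m - (i.val + 1)

private lemma reach_dist_triangle {V : Type*} {G : SimpleGraph V} {u v w : V}
    (h1 : G.Reachable u v) (h2 : G.Reachable v w) :
    G.dist u w ≤ G.dist u v + G.dist v w := by
  obtain ⟨p, hp⟩ := h1.exists_walk_length_eq_dist
  obtain ⟨q, hq⟩ := h2.exists_walk_length_eq_dist
  rw [← hp, ← hq, ← SimpleGraph.Walk.length_append]
  apply SimpleGraph.dist_le

theorem stmt_0 {V : Type*} [Fintype V] (G : SimpleGraph V) (r : ℕ) (hr : 1 ≤ r)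
    (x : Fin r → V)
    (hx : ∀ i j : Fin r, i ≠ j →
      ¬ G.Reachable (x i) (x j) ∨ 2 * r - 1 ≤ G.dist (x i) (x j)) :
    ¬ BurnsIn G (r - 1) := by
  rintro ⟨m, hm, y, h⟩
  choose f hreach hdist using fun j : Fin r => h (x j)
  have hcard : Fintype.card (Fin m) < Fintype.card (Fin r) := by
    simpa using lt_of_le_of_lt hm (Nat.sub_lt hr one_pos)
  obtain ⟨j, j', hne, heq⟩ := Fintype.exists_ne_map_eq_of_card_lt f hcard
  have hR : G.Reachable (x j) (x j') :=
    ((hreach j).symm.trans (heq ▸ hreach j'))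
  have hb : ∀ i : Fin r, G.dist (y (f i)) (x i) ≤ m - 1 :=
    fun i => le_trans (hdist i) (by omega)
  have hd : G.dist (x j) (x j') ≤ (m - 1) + (m - 1) := by
    calc G.dist (x j) (x j') ≤ G.dist (x j) (y (f j')) + G.dist (y (f j')) (x j') :=
          reach_dist_triangle (heq ▸ (hreach j).symm) (hreach j')
      _ ≤ (m - 1) + (m - 1) := by
          refine Nat.add_le_add ?_ (hb j')
          rw [SimpleGraph.dist_comm, ← heq]
          exact hb j
  rcases hx j j' hne with h1 | h2
  · exact h1 hR
  · have := (f j).isLt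
    omega
end

section
/- Let G be a finite nonempty simple graph, and let g* be the least integer g ≥ 1 for which there exists a set S of at most g−1 vertices of G such that every vertex of G is reachable from some vertex of S at graph distance at most 2g−2 (such a g exists). If g* ≥ 2, then G can be burned in at most 3(g*−1) rounds and G cannot be burned in fewer than g*−1 rounds; in particular the burning number b(G) satisfies g*−1 ≤ b(G) ≤ 3(g*−1). -/
/-- The burning number of `G`: the least `k` such that `G` can be burned in `k` rounds. -/
noncomputable def burningNumber {V : Type*} (G : SimpleGraph V) : ℕ :=
  sInf {k | BurnsIn G k}

/-- `G` admits a set of at most `g - 1` vertices such that every vertex is reachable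
from one of them at distance at most `2g - 2`. -/
def GoodGuess {V : Type*} (G : SimpleGraph V) (g : ℕ) : Prop :=
  ∃ S : Finset V, S.card ≤ g - 1 ∧
    ∀ v : V, ∃ s ∈ S, G.Reachable s v ∧ G.dist s v ≤ 2 * g - 2

theorem stmt_3 {V : Type*} [Fintype V] [Nonempty V] (G : SimpleGraph V)
    (gstar : ℕ) (hgstar : GoodGuess G gstar)
    (hmin : ∀ g, 1 ≤ g → GoodGuess G g → gstar ≤ g)
    (h1 : 1 ≤ gstar) (h2 : 2 ≤ gstar) :
    BurnsIn G (3 * (gstar - 1)) ∧ ¬ BurnsIn G (gstar - 2) ∧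
      gstar - 1 ≤ burningNumber G ∧ burningNumber G ≤ 3 * (gstar - 1) := by
  classical
  obtain ⟨S, hScard, hScov⟩ := hgstar
  obtain ⟨v₀⟩ := (inferInstance : Nonempty V)
  have hlen : S.toList.length = S.card := Finset.length_toList S
  -- Upper bound: burns in 3*(gstar-1)
  have hburn : BurnsIn G (3 * (gstar - 1)) := by
    refine ⟨3 * (gstar - 1), le_rfl, fun i => S.toList.getD i.val v₀, fun v => ?_⟩
    obtain ⟨s, hsS, hre, hd⟩ := hScov v
    obtain ⟨j, hj, hget⟩ := List.mem_iff_getElem.1 (Finset.mem_toList.2 hsS)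
    have hj' : j < 3 * (gstar - 1) := by
      have := hlen ▸ hj
      omega
    have heq : S.toList.getD j v₀ = s := by
      rw [List.getD_eq_getElem _ _ hj, hget]
    refine ⟨⟨j, hj'⟩, ?_, ?_⟩
    · show G.Reachable (S.toList.getD j v₀) v
      rw [heq]; exact hre
    · show G.dist (S.toList.getD j v₀) v ≤ 3 * (gstar - 1) - (j + 1)
      rw [heq]
      have hjc : j < S.card := hlen ▸ hj
      omega
  -- Lower bound: cannot burn in gstar - 2
  have hnoburn : ¬ BurnsIn G (gstar - 2) := by
    rintro ⟨m, hm, x, hx⟩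
    have hgg : GoodGuess G (gstar - 1) := by
      refine ⟨Finset.image x Finset.univ, ?_, fun v => ?_⟩
      · calc (Finset.image x Finset.univ).card ≤ Finset.univ.card := Finset.card_image_le
          _ = m := by simp
          _ ≤ gstar - 1 - 1 := by omega
      · obtain ⟨i, hre, hd⟩ := hx v
        exact ⟨x i, Finset.mem_image_of_mem x (Finset.mem_univ i),
          hre, by have := i.isLt; omega⟩
    have := hmin (gstar - 1) (by omega) hgg
    omega
  refine ⟨hburn, hnoburn, ?_, Nat.sInf_le hburn⟩
  have hmem : burningNumber G ∈ {k | BurnsIn G k} := Nat.sInf_mem ⟨_, hburn⟩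
  by_contra h
  push_neg at h
  apply hnoburn
  obtain ⟨m, hm, x, hx⟩ := hmem
  exact ⟨m, by omega, x, hx⟩
end

section
/- Let T be a finite tree rooted at a vertex s, and let g ≥ 1 be an integer. Write depth(u) for dist_T(u, s). Let v be a vertex with depth(v) ≥ g and let c be the g-ancestor of v, i.e., the vertex at distance g from v on the path from v to s. Then for every vertex c' with dist_T(c', v) ≤ g and every vertex w with dist_T(c', w) ≤ g and depth(w) ≤ depth(v), one has dist_T(c, w) ≤ g. -/
open SimpleGraph Walk

private lemma tree_path_len {V : Type*} {T : SimpleGraph V} (hconn : T.Connected)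
    (hacyc : T.IsAcyclic) {x y : V} {p : T.Walk x y} (hp : p.IsPath) :
    p.length = T.dist x y := by
  obtain ⟨q, hq, hql⟩ := hconn.exists_path_of_dist x y
  have h : (⟨p, hp⟩ : T.Path x y) = ⟨q, hq⟩ := hacyc.path_unique _ _
  rw [← hql]
  exact congrArg Walk.length (congrArg Subtype.val h)

private lemma tree_dist_split {V : Type*} [DecidableEq V] {T : SimpleGraph V}
    (hconn : T.Connected) (hacyc : T.IsAcyclic) {x y u : V} {p : T.Walk x y}
    (hp : p.IsPath) (h : u ∈ p.support) :
    T.dist x u + T.dist u y = T.dist x y := by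
  have h1 := tree_path_len hconn hacyc (hp.takeUntil h)
  have h2 := tree_path_len hconn hacyc (hp.dropUntil h)
  have h3 := tree_path_len hconn hacyc hp
  have h4 := congrArg Walk.length (p.take_spec h)
  rw [Walk.length_append] at h4
  omega

private lemma tree_isPath_append {V : Type*} {T : SimpleGraph V} {x y z : V}
    {p : T.Walk x y} {q : T.Walk y z} (hp : p.IsPath) (hq : q.IsPath)
    (h : ∀ u, u ∈ p.support → u ∈ q.support → u = y) :
    (p.append q).IsPath := by
  rw [Walk.isPath_def, Walk.support_append]
  apply List.Nodup.append hp.support_nodup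
  · exact (List.tail_sublist _).nodup hq.support_nodup
  · intro a ha ha'
    have hy : q.support = y :: q.support.tail := q.support_eq_cons
    have hnotin : y ∉ q.support.tail := by
      have := hq.support_nodup
      rw [hy] at this
      exact (List.nodup_cons.mp this).1
    have haq : a ∈ q.support := by rw [hy]; exact List.mem_cons_of_mem _ ha'
    exact hnotin (h a ha haq ▸ ha')

theorem stmt_6 {V : Type*} [Fintype V] (T : SimpleGraph V)
    (hconn : T.Connected) (hacyc : T.IsAcyclic)
    (s : V) (g : ℕ) (hg : 1 ≤ g)
    (v : V) (hv : g ≤ T.dist v s)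
    (c : V) (hc1 : T.dist v c = g) (hc2 : T.dist c s + g = T.dist v s)
    (c' : V) (hc' : T.dist c' v ≤ g)
    (w : V) (hw : T.dist c' w ≤ g) (hdepth : T.dist w s ≤ T.dist v s) :
    T.dist c w ≤ g := by
  classical
  obtain ⟨p1, hp1, hl1⟩ := hconn.exists_path_of_dist v c
  obtain ⟨p2, hp2, hl2⟩ := hconn.exists_path_of_dist c s
  -- the concatenation is a path from v to s through c
  have hP : (p1.append p2).IsPath := by
    apply tree_isPath_append hp1 hp2
    intro u hu1 hu2
    have e1 := tree_dist_split hconn hacyc hp1 hu1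
    have e2 := tree_dist_split hconn hacyc hp2 hu2
    have tri : T.dist v s ≤ T.dist v u + T.dist u s := hconn.dist_triangle
    have hcm : T.dist u c = T.dist c u := T.dist_comm
    have h0 : T.dist c u = 0 := by omega
    exact (hconn.dist_eq_zero_iff.mp (hcm ▸ h0)).symm
  set P : T.Walk v s := p1.append p2 with hPdef
  have hcP : c ∈ P.support := by
    rw [hPdef, Walk.mem_support_append_iff]
    exact Or.inl p1.end_mem_support
  -- choose m on P minimizing dist to w
  obtain ⟨m, hmF, hmin'⟩ := P.support.toFinset.exists_min_image (fun u => T.dist w u)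
    ⟨v, by rw [List.mem_toFinset]; exact P.start_mem_support⟩
  have hmP : m ∈ P.support := List.mem_toFinset.mp hmF
  have hmin : ∀ u ∈ P.support, T.dist w m ≤ T.dist w u := fun u hu =>
    hmin' u (List.mem_toFinset.mpr hu)
  -- geodesic from w to m
  obtain ⟨q, hq, hql⟩ := hconn.exists_path_of_dist w m
  have hqmin : ∀ u, u ∈ q.support → u ∈ P.support → u = m := by
    intro u huq huP
    have e1 := tree_dist_split hconn hacyc hq huq
    have h2 := hmin u huP
    have hcm : T.dist u m = T.dist m u := T.dist_comm
    have h0 : T.dist m u = 0 := by omega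
    exact (hconn.dist_eq_zero_iff.mp h0).symm
  -- facts (a): dist w v = dist w m + dist m v
  have ha : T.dist w v = T.dist w m + T.dist m v := by
    have htk : (P.takeUntil m hmP).IsPath := hP.takeUntil hmP
    have hrev : (P.takeUntil m hmP).reverse.IsPath := htk.reverse
    have happ : (q.append (P.takeUntil m hmP).reverse).IsPath := by
      apply tree_isPath_append hq hrev
      intro u hu1 hu2
      apply hqmin u hu1
      have : u ∈ (P.takeUntil m hmP).support := by
        rwa [Walk.support_reverse, List.mem_reverse] at hu2
      exact P.support_takeUntil_subset hmP this
    have hlen := tree_path_len hconn hacyc happ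
    rw [Walk.length_append, Walk.length_reverse, hql] at hlen
    have htl := tree_path_len hconn hacyc htk
    have hvm : T.dist m v = T.dist v m := T.dist_comm
    omega
  -- facts (b): dist w s = dist w m + dist m s
  have hb : T.dist w s = T.dist w m + T.dist m s := by
    have hdr : (P.dropUntil m hmP).IsPath := hP.dropUntil hmP
    have happ : (q.append (P.dropUntil m hmP)).IsPath := by
      apply tree_isPath_append hq hdr
      intro u hu1 hu2
      exact hqmin u hu1 (P.support_dropUntil_subset hmP hu2)
    have hlen := tree_path_len hconn hacyc happ
    rw [Walk.length_append, hql] at hlen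
    have hdl := tree_path_len hconn hacyc hdr
    omega
  -- fact (c): dist v m + dist m s = dist v s
  have hc : T.dist v m + T.dist m s = T.dist v s := tree_dist_split hconn hacyc hP hmP
  -- dist v w ≤ 2g
  have hvw : T.dist v w ≤ 2 * g := by
    have tri : T.dist v w ≤ T.dist v c' + T.dist c' w := hconn.dist_triangle
    have hcm : T.dist v c' = T.dist c' v := T.dist_comm
    omega
  -- position of m relative to c on P
  have hsplit : m ∈ (P.takeUntil c hcP).support ∨ m ∈ (P.dropUntil c hcP).support := by
    rw [← Walk.mem_support_append_iff, P.take_spec hcP]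
    exact hmP
  have triCW : T.dist c w ≤ T.dist c m + T.dist m w := hconn.dist_triangle
  have hcm1 : T.dist m w = T.dist w m := T.dist_comm
  have hcm2 : T.dist m v = T.dist v m := T.dist_comm
  have hcm3 : T.dist v w = T.dist w v := T.dist_comm
  cases hsplit with
  | inl hmc =>
    -- m between v and c : dist v m + dist m c = g
    have e1 : T.dist v m + T.dist m c = T.dist v c :=
      tree_dist_split hconn hacyc (hP.takeUntil hcP) hmc
    have hcm4 : T.dist m c = T.dist c m := T.dist_comm
    omega
  | inr hmc =>
    -- m between c and s : dist c m + dist m s = dist c s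
    have e1 : T.dist c m + T.dist m s = T.dist c s :=
      tree_dist_split hconn hacyc (hP.dropUntil hcP) hmc
    omega
end

section
/- Let T be a finite nonempty tree, and let g* be the least integer g ≥ 1 for which T admits a g-site partition, i.e., a set of at most g vertices such that every vertex of T is at graph distance at most g from some vertex of the set (such a g exists). Then T can be burned in at most 2g* rounds, and T cannot be burned in fewer than g*−1 rounds; in particular the burning number b(T) satisfies g*−1 ≤ b(T) ≤ 2g*. -/
/-- A `g`-site partition of `T`: a set of at most `g` vertices (sites) such that every
vertex is at distance at most `g` from some site. -/
def HasSitePartition {V : Type*} (T : SimpleGraph V) (g : ℕ) : Prop :=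
  ∃ S : Finset V, S.card ≤ g ∧ ∀ v : V, ∃ s ∈ S, T.dist s v ≤ g

/-!
Listing the sites of a `g`-site partition as the first activators of a schedule of length `2g`
burns every site to radius at least `g`, hence burns the whole graph. Conversely the activators
of any schedule of length `m` form an `m`-site partition, so a schedule shorter than `g* - 1`
would contradict the minimality of `g*`.
-/

section

variable {V : Type*} {G : SimpleGraph V}

theorem BurnsIn.mono {k l : ℕ} (h : BurnsIn G k) (hkl : k ≤ l) : BurnsIn G l := by
  obtain ⟨m, hm, x, hx⟩ := h
  exact ⟨m, hm.trans hkl, x, hx⟩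

theorem BurnsIn.pos [Nonempty V] {k : ℕ} (h : BurnsIn G k) : 0 < k := by
  obtain ⟨m, hm, x, hx⟩ := h
  obtain ⟨i, -⟩ := hx (Classical.arbitrary V)
  exact Nat.lt_of_lt_of_le (Nat.zero_lt_of_lt i.isLt) hm

theorem BurnsIn.hasSitePartition {k : ℕ} (h : BurnsIn G k) : HasSitePartition G k := by
  classical
  obtain ⟨m, hm, x, hx⟩ := h
  refine ⟨Finset.univ.image x, ?_, fun v => ?_⟩
  · calc (Finset.univ.image x).card ≤ (Finset.univ : Finset (Fin m)).card := Finset.card_image_le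
      _ = m := Finset.card_fin m
      _ ≤ k := hm
  · obtain ⟨i, -, hd⟩ := hx v
    exact ⟨x i, Finset.mem_image_of_mem x (Finset.mem_univ i), by omega⟩

/-- The site with index `i < a` is activated in round `i + 1` of `a + r`, so it burns its
`r`-ball. -/
theorem burnsIn_add_of_cover (hG : G.Connected) {S : Finset V} {a r : ℕ} (hS : S.card ≤ a)
    (hcov : ∀ v, ∃ s ∈ S, G.dist s v ≤ r) : BurnsIn G (a + r) := by
  obtain ⟨v₀⟩ := hG.nonempty
  let x : Fin (a + r) → V := fun i =>
    if hi : i.val < S.card then S.equivFin.symm ⟨i, hi⟩ else v₀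
  refine ⟨a + r, le_rfl, x, fun v => ?_⟩
  obtain ⟨s, hs, hd⟩ := hcov v
  set j := S.equivFin ⟨s, hs⟩
  have hxj : x ⟨j, by omega⟩ = s := by simp [x, j]
  refine ⟨⟨j, by omega⟩, ?_, ?_⟩ <;> rw [hxj]
  · exact hG s v
  · have := j.isLt
    dsimp only
    omega

theorem HasSitePartition.burnsIn_two_mul {g : ℕ} (h : HasSitePartition G g)
    (hG : G.Connected) : BurnsIn G (2 * g) := by
  obtain ⟨S, hcard, hcov⟩ := h
  exact two_mul g ▸ burnsIn_add_of_cover hG hcard hcov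

theorem burningNumber_le {k : ℕ} (h : BurnsIn G k) : burningNumber G ≤ k :=
  Nat.sInf_le h

theorem lt_burningNumber_of_not_burnsIn {k l : ℕ} (hk : ¬ BurnsIn G k) (hl : BurnsIn G l) :
    k < burningNumber G := by
  by_contra! hle
  have hb : BurnsIn G (burningNumber G) := Nat.sInf_mem (s := {k | BurnsIn G k}) ⟨l, hl⟩
  exact hk (hb.mono hle)

end

theorem stmt_7_general {V : Type*} (T : SimpleGraph V)
    (hconn : T.Connected)
    (gstar : ℕ) (h1 : 1 ≤ gstar) (hgstar : HasSitePartition T gstar)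
    (hmin : ∀ g, 1 ≤ g → HasSitePartition T g → gstar ≤ g) :
    BurnsIn T (2 * gstar) ∧ ¬ BurnsIn T (gstar - 2) ∧
      gstar - 1 ≤ burningNumber T ∧ burningNumber T ≤ 2 * gstar := by
  have hburn : BurnsIn T (2 * gstar) := hgstar.burnsIn_two_mul hconn
  have hnot : ¬ BurnsIn T (gstar - 2) := fun h => by
    have := hconn.nonempty
    have := hmin _ h.pos h.hasSitePartition
    omega
  have hlb := lt_burningNumber_of_not_burnsIn hnot hburn
  exact ⟨hburn, hnot, by omega, burningNumber_le hburn⟩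

theorem stmt_7 {V : Type*} [Fintype V] (T : SimpleGraph V)
    (hconn : T.Connected) (hacyc : T.IsAcyclic)
    (gstar : ℕ) (h1 : 1 ≤ gstar) (hgstar : HasSitePartition T gstar)
    (hmin : ∀ g, 1 ≤ g → HasSitePartition T g → gstar ≤ g) :
    BurnsIn T (2 * gstar) ∧ ¬ BurnsIn T (gstar - 2) ∧
      gstar - 1 ≤ burningNumber T ∧ burningNumber T ≤ 2 * gstar :=
  stmt_7_general T hconn gstar h1 hgstar hmin
end

section
/- Let B₁ and B₂ be finite multisets of real numbers, all lying in the interval (0,1], each with total sum at least 1. Suppose every element of B₁ is at most 1/3, and B₂ contains at least two elements that are each at least 2/3. Then there exist finite multisets B₁' and B₂' with B₁' + B₂' = B₁ + B₂ (as multisets), such that each of B₁' and B₂' has total sum at least 1 and each contains at least one element of size at least 2/3. -/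
lemma aux_exists_chunk (B : Multiset ℝ) (hle : ∀ x ∈ B, x ≤ 1/3)
    (hs : 1/3 ≤ B.sum) : ∃ S ≤ B, 1/3 ≤ S.sum ∧ S.sum ≤ 2/3 := by
  induction B using Multiset.strongInductionOn with
  | ih B ih =>
    by_cases h : B.sum ≤ 2/3
    · exact ⟨B, le_rfl, hs, h⟩
    · have hne : B ≠ 0 := by
        rintro rfl; simp at hs; linarith
      obtain ⟨x, hx⟩ := Multiset.exists_mem_of_ne_zero hne
      have hcons := Multiset.cons_erase hx
      have hsum : B.sum = x + (B.erase x).sum := by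
        rw [← hcons]; simp
      have hxle := hle x hx
      have hlt : B.erase x < B := Multiset.erase_lt.mpr hx
      obtain ⟨S, hS, h1, h2⟩ := ih (B.erase x) hlt
        (fun y hy => hle y (Multiset.mem_of_mem_erase hy))
        (by push_neg at h; linarith)
      exact ⟨S, hS.trans (Multiset.erase_le x B), h1, h2⟩

theorem stmt_9 (B1 B2 : Multiset ℝ)
    (h1 : ∀ x ∈ B1, 0 < x ∧ x ≤ 1) (h2 : ∀ x ∈ B2, 0 < x ∧ x ≤ 1)
    (hs1 : 1 ≤ B1.sum) (hs2 : 1 ≤ B2.sum)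
    (hsmall : ∀ x ∈ B1, x ≤ 1 / 3)
    (hbig : ∃ a b : ℝ, ({a, b} : Multiset ℝ) ≤ B2 ∧ 2 / 3 ≤ a ∧ 2 / 3 ≤ b) :
    ∃ B1' B2' : Multiset ℝ, B1' + B2' = B1 + B2 ∧
      1 ≤ B1'.sum ∧ 1 ≤ B2'.sum ∧
      (∃ a ∈ B1', 2 / 3 ≤ a) ∧ (∃ a ∈ B2', 2 / 3 ≤ a) := by
  obtain ⟨a, b, hab, ha, hb⟩ := hbig
  obtain ⟨S, hS, hS1, hS2⟩ := aux_exists_chunk B1 hsmall (by linarith)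
  have haB2 : a ∈ B2 := Multiset.mem_of_le hab (by simp)
  have hbe : b ∈ B2.erase a := by
    have : ({a, b} : Multiset ℝ).erase a ≤ B2.erase a :=
      Multiset.erase_le_erase a hab
    exact Multiset.mem_of_le this (by simp)
  -- sums
  have hB1split : S + (B1 - S) = B1 := by
    rw [add_comm]; exact tsub_add_cancel_of_le hS
  have hB1sum : B1.sum = S.sum + (B1 - S).sum := by
    rw [← hB1split]; simp
  have hB2cons : a ::ₘ B2.erase a = B2 := Multiset.cons_erase haB2
  have hB2sum : B2.sum = a + (B2.erase a).sum := by
    rw [← hB2cons]; simp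
  have hbcons := Multiset.cons_erase hbe
  have heraseb : (B2.erase a).sum = b + ((B2.erase a).erase b).sum := by
    rw [← hbcons]; simp
  have hrest : 0 ≤ ((B2.erase a).erase b).sum :=
    Multiset.sum_nonneg fun y hy =>
      (h2 y (Multiset.mem_of_mem_erase (Multiset.mem_of_mem_erase hy))).1.le
  refine ⟨a ::ₘ S, (B1 - S) + B2.erase a, ?_, ?_, ?_, ⟨a, by simp, ha⟩,
    ⟨b, by simp [hbe], hb⟩⟩
  · calc a ::ₘ S + ((B1 - S) + B2.erase a)
        = (S + (B1 - S)) + ({a} + B2.erase a) := by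
          rw [← Multiset.singleton_add]; ac_rfl
      _ = B1 + B2 := by rw [hB1split, Multiset.singleton_add, hB2cons]
  · simp only [Multiset.sum_cons]; linarith
  · simp only [Multiset.sum_add]; linarith
end

section
/- Let M be a finite multiset of real numbers in (0,1], let S be a sub-multiset of M, and let m be a natural number with sum(S) ≥ 2m. Define cover(N), for a finite multiset N of reals in (0,1], as the greatest number of pairwise disjoint sub-multisets of N each having total sum at least 1. Then cover(M) ≥ cover(M − S) + m; that is, removing items of total size at least 2m from a bin covering instance decreases the optimal number of covered bins by at least m. -/
/-- `N` can cover `m` bins: there are `m` pairwise disjoint sub-multisets of `N`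
(i.e. a multiset of `m` bins whose multiset sum is contained in `N`), each of
total sum at least `1`. -/
def Covers (N : Multiset ℝ) (m : ℕ) : Prop :=
  ∃ P : Multiset (Multiset ℝ), P.card = m ∧ P.sum ≤ N ∧ ∀ B ∈ P, (1 : ℝ) ≤ B.sum

/-- The maximum number of unit bins coverable by pairwise disjoint sub-multisets of `N`. -/
noncomputable def cover (N : Multiset ℝ) : ℕ :=
  sSup {m | Covers N m}

/-! An optimal cover of `M - S` and a cover of `m` bins by `S` alone use disjoint items, so
together they cover `cover (M - S) + m` bins with `M`. Items of size at most `1` and total size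
at least `2m` cover `m` bins greedily: a sub-multiset whose sum first reaches `1` has sum at
most `2`, so removing it leaves total size at least `2(m - 1)`. -/

namespace Covers

theorem zero (N : Multiset ℝ) : Covers N 0 :=
  ⟨0, by simp⟩

theorem card_le {N : Multiset ℝ} {m : ℕ} (h : Covers N m) : m ≤ N.card := by
  obtain ⟨P, rfl, hle, hbins⟩ := h
  have hpos : ∀ k ∈ P.map Multiset.card, 1 ≤ k := by
    simp only [Multiset.mem_map]
    rintro _ ⟨B, hB, rfl⟩
    refine Multiset.card_pos.2 fun h0 => ?_
    have := hbins B hB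
    simp [h0] at this
    linarith
  calc P.card = (P.map Multiset.card).card • 1 := by simp
    _ ≤ (P.map Multiset.card).sum := Multiset.card_nsmul_le_sum hpos
    _ = P.sum.card := (Multiset.card_join P).symm
    _ ≤ N.card := Multiset.card_le_card hle

theorem add {N N' : Multiset ℝ} {a b : ℕ} (h : Covers N a) (h' : Covers N' b) :
    Covers (N + N') (a + b) := by
  obtain ⟨P, rfl, hle, hbins⟩ := h
  obtain ⟨P', rfl, hle', hbins'⟩ := h'
  refine ⟨P + P', Multiset.card_add _ _, ?_, ?_⟩
  · rw [Multiset.sum_add]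
    exact add_le_add hle hle'
  · simp only [Multiset.mem_add]
    rintro B (hB | hB)
    exacts [hbins B hB, hbins' B hB]

theorem le_cover {N : Multiset ℝ} {m : ℕ} (h : Covers N m) : m ≤ cover N :=
  le_csSup ⟨N.card, fun _ => card_le⟩ h

theorem cover_self (N : Multiset ℝ) : Covers N (cover N) :=
  Nat.sSup_mem ⟨0, zero N⟩ ⟨N.card, fun _ => card_le⟩

end Covers

theorem Multiset.exists_le_one_le_sum_le_two {S : Multiset ℝ} (hS : ∀ x ∈ S, x ≤ 1)
    (h1 : 1 ≤ S.sum) : ∃ B ≤ S, 1 ≤ B.sum ∧ B.sum ≤ 2 := by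
  induction S using Multiset.induction with
  | empty => simp at h1; linarith
  | cons a S ih =>
    by_cases hS1 : 1 ≤ S.sum
    · obtain ⟨B, hB, hB1, hB2⟩ := ih (fun x hx => hS x (Multiset.mem_cons_of_mem hx)) hS1
      exact ⟨B, hB.trans (Multiset.le_cons_self _ _), hB1, hB2⟩
    · refine ⟨a ::ₘ S, le_rfl, h1, ?_⟩
      have ha := hS a (Multiset.mem_cons_self _ _)
      rw [Multiset.sum_cons]
      linarith

theorem covers_of_two_mul_le_sum {S : Multiset ℝ} (hS : ∀ x ∈ S, x ≤ 1) {m : ℕ}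
    (hsum : (2 * m : ℝ) ≤ S.sum) : Covers S m := by
  induction m generalizing S with
  | zero => exact Covers.zero S
  | succ n ih =>
    obtain ⟨B, hB, hB1, hB2⟩ :=
      Multiset.exists_le_one_le_sum_le_two hS (by push_cast at hsum; linarith)
    have hsplit : B.sum + (S - B).sum = S.sum := by
      rw [← Multiset.sum_add, add_tsub_cancel_of_le hB]
    have hrest : Covers (S - B) n :=
      ih (fun x hx => hS x (Multiset.mem_of_le tsub_le_self hx)) (by push_cast at hsum; linarith)
    have hbin : Covers B 1 := ⟨{B}, rfl, by simp, by simpa using hB1⟩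
    simpa [add_tsub_cancel_of_le hB, add_comm] using hbin.add hrest

theorem stmt_11 (M S : Multiset ℝ) (hM : ∀ x ∈ M, 0 < x ∧ x ≤ 1)
    (hS : S ≤ M) (m : ℕ) (hsum : (2 * m : ℝ) ≤ S.sum) :
    cover (M - S) + m ≤ cover M := by
  have hcovS : Covers S m :=
    covers_of_two_mul_le_sum (fun x hx => (hM x (Multiset.mem_of_le hS hx)).2) hsum
  have hcovM := (Covers.cover_self (M - S)).add hcovS
  rw [tsub_add_cancel_of_le hS] at hcovM
  exact hcovM.le_cover
end

section
/- Let S be a finite multiset of real numbers in (0,1] and let m be a natural number with sum(S) ≥ 2m. Then S can be partitioned so as to contain m pairwise disjoint sub-multisets, each with total sum at least 1 (indeed each with total sum in [1,2)). -/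
/-!
Greedy packing: as long as the sum is at least `t`, the shortest tail of the multiset whose sum
reaches `t` has sum below `t + c`, since removing its first element (of size at most `c`) drops the
sum below `t`. Removing such a block costs less than `t + c`, so a sum of at least `m • (t + c)`
leaves room for `m` blocks.
-/

namespace Multiset

variable {α : Type*} [AddCommGroup α] [LinearOrder α] [IsOrderedAddMonoid α]

theorem exists_le_sum_mem_Ico {S : Multiset α} {t c : α} (ht : 0 < t) (hc : ∀ x ∈ S, x ≤ c)
    (hS : t ≤ S.sum) : ∃ B ≤ S, B.sum ∈ Set.Ico t (t + c) := by
  induction S using Multiset.induction with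
  | empty => exact absurd hS (by simpa using ht)
  | cons a T ih =>
    by_cases hT : t ≤ T.sum
    · obtain ⟨B, hBT, hB⟩ := ih (fun x hx => hc x (mem_cons_of_mem hx)) hT
      exact ⟨B, hBT.trans (le_cons_self T a), hB⟩
    · refine ⟨a ::ₘ T, le_rfl, hS, ?_⟩
      rw [sum_cons, add_comm t]
      exact add_lt_add_of_le_of_lt (hc a (mem_cons_self a T)) (not_le.mp hT)

theorem exists_card_eq_sum_le_forall_sum_mem_Ico {S : Multiset α} {t c : α} (ht : 0 < t)
    (hc₀ : 0 ≤ c) (hc : ∀ x ∈ S, x ≤ c) (m : ℕ) (hm : m • (t + c) ≤ S.sum) :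
    ∃ P : Multiset (Multiset α), P.card = m ∧ P.sum ≤ S ∧ ∀ B ∈ P, B.sum ∈ Set.Ico t (t + c) := by
  induction m generalizing S with
  | zero => exact ⟨0, rfl, by simp, by simp⟩
  | succ m ih =>
    rw [succ_nsmul] at hm
    have hS : t ≤ S.sum := calc
      t ≤ t + c := le_add_of_nonneg_right hc₀
      _ ≤ m • (t + c) + (t + c) := le_add_of_nonneg_left (nsmul_nonneg (add_nonneg ht.le hc₀) m)
      _ ≤ S.sum := hm
    obtain ⟨B, hBS, hB⟩ := exists_le_sum_mem_Ico ht hc hS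
    have hsplit : B + (S - B) = S := add_tsub_cancel_of_le hBS
    have hrest : m • (t + c) ≤ (S - B).sum := by
      refine (add_le_add_iff_right (t + c)).mp ?_
      calc m • (t + c) + (t + c) ≤ S.sum := hm
        _ = B.sum + (S - B).sum := by rw [← sum_add, hsplit]
        _ ≤ (S - B).sum + (t + c) := by rw [add_comm]; exact add_le_add_right hB.2.le _
    obtain ⟨P, hPcard, hPS, hP⟩ := ih (fun x hx => hc x (mem_of_le tsub_le_self hx)) hrest
    refine ⟨B ::ₘ P, by simp [hPcard], ?_, ?_⟩
    · rw [sum_cons, ← hsplit]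
      exact add_le_add_right hPS B
    · intro C hC
      rcases mem_cons.mp hC with rfl | hCP
      exacts [hB, hP C hCP]

end Multiset

theorem stmt_12 (S : Multiset ℝ) (hS : ∀ x ∈ S, 0 < x ∧ x ≤ 1)
    (m : ℕ) (hsum : (2 * m : ℝ) ≤ S.sum) :
    ∃ P : Multiset (Multiset ℝ), P.card = m ∧ P.sum ≤ S ∧
      ∀ B ∈ P, (1 : ℝ) ≤ B.sum ∧ B.sum < 2 := by
  have hm : m • (1 + 1 : ℝ) ≤ S.sum := by rw [nsmul_eq_mul]; linarith
  obtain ⟨P, hPcard, hPS, hP⟩ := Multiset.exists_card_eq_sum_le_forall_sum_mem_Ico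
    zero_lt_one zero_le_one (fun x hx => (hS x hx).2) m hm
  exact ⟨P, hPcard, hPS, fun B hB => by simpa [one_add_one_eq_two] using hP B hB⟩
end

section
/- Let n_1,…,n_b be positive integers and k ≥ 1 an integer. Suppose there exist pairwise disjoint subsets S_1,…,S_b of {0,1,…,k−1} such that for every i, the sum over j ∈ S_i of (2j+1) is at least n_i. Then the path forest with path orders n_1,…,n_b can be burned in at most k rounds (the fire associated with j ∈ S_i is started in the i-th path at round k − j). -/
/-- The path forest with `b` components, the `i`-th being a path on `n i` vertices. -/
def pathForest (b : ℕ) (n : Fin b → ℕ) : SimpleGraph (Σ i : Fin b, Fin (n i)) where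
  Adj u v := u.1 = v.1 ∧ (u.2.val + 1 = v.2.val ∨ v.2.val + 1 = u.2.val)
  symm := by
    constructor
    rintro u v ⟨h1, h2⟩
    exact ⟨h1.symm, h2.symm⟩
  loopless := by
    constructor
    rintro u ⟨-, h⟩
    omega

/-! Order the radii in `S i` increasingly and lay the intervals of lengths `2 j + 1` end to end
along the `i`-th path. Since their total length is at least `n i`, every vertex of the path lies
in one of them, and a fire of radius `j` started at the centre of the interval of length
`2 j + 1` (clamped to the path) covers that interval. Disjointness of the `S i` makes the fires
of different radii use different rounds. -/

theorem Finset.exists_mem_sum_filter_lt_le_and_lt {α : Type*} [LinearOrder α] (w : α → ℕ)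
    (T : Finset α) {p : ℕ} (hp : p < ∑ j ∈ T, w j) :
    ∃ j ∈ T, ∑ j' ∈ T with j' < j, w j' ≤ p ∧ p < ∑ j' ∈ T with j' < j, w j' + w j := by
  classical
  induction T using Finset.induction_on_max generalizing p with
  | empty => simp at hp
  | insert a s hlt ih =>
    have has : a ∉ s := fun h => (hlt a h).false
    rw [sum_insert has] at hp
    by_cases hps : p < ∑ j ∈ s, w j
    · obtain ⟨j, hj, hle, hlt'⟩ := ih hps
      have hfilter : {j' ∈ insert a s | j' < j} = {j' ∈ s | j' < j} := by
        rw [filter_insert, if_neg (hlt j hj).not_gt]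
      exact ⟨j, mem_insert_of_mem hj, by rwa [hfilter], by rwa [hfilter]⟩
    · have hfilter : {j' ∈ insert a s | j' < a} = s := by
        rw [filter_insert, if_neg (lt_irrefl a), filter_true_of_mem hlt]
      refine ⟨a, mem_insert_self a s, ?_⟩
      rw [hfilter]
      omega

theorem burnsIn_of_cover {V : Type*} (G : SimpleGraph V) (k : ℕ) (A : ℕ → Set V)
    (hcover : ∀ v, ∃ t < k, v ∈ A t)
    (hball : ∀ t < k, (A t).Nonempty → ∃ u, ∀ v ∈ A t, ∃ w : G.Walk u v, w.length ≤ t) :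
    BurnsIn G k := by
  rcases isEmpty_or_nonempty V with _ | ⟨⟨v₀⟩⟩
  · exact ⟨0, Nat.zero_le k, isEmptyElim, isEmptyElim⟩
  have hcentre : ∀ t, ∃ u, t < k → ∀ v ∈ A t, ∃ w : G.Walk u v, w.length ≤ t := by
    intro t
    by_cases h : t < k ∧ (A t).Nonempty
    · obtain ⟨u, hu⟩ := hball t h.1 h.2
      exact ⟨u, fun _ => hu⟩
    · exact ⟨v₀, fun ht v hv => (h ⟨ht, v, hv⟩).elim⟩
  choose u hu using hcentre
  refine ⟨k, le_rfl, fun r => u (k - 1 - r), fun v => ?_⟩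
  obtain ⟨t, htk, hvt⟩ := hcover v
  obtain ⟨w, hw⟩ := hu t htk v hvt
  refine ⟨⟨k - 1 - t, by omega⟩, ?_⟩
  have hround : k - 1 - (k - 1 - t) = t := by omega
  have hrem : k - (k - 1 - t + 1) = t := by omega
  simp only [hround, hrem]
  exact ⟨⟨w⟩, (SimpleGraph.dist_le w).trans hw⟩

section pathForest

variable {b : ℕ} {n : Fin b → ℕ}

theorem pathForest_exists_walk_of_le (i : Fin b) {a c : Fin (n i)} (hac : a ≤ c) :
    ∃ w : (pathForest b n).Walk ⟨i, a⟩ ⟨i, c⟩, w.length = c - a := by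
  generalize hd : c.val - a.val = d
  induction d generalizing a with
  | zero =>
    obtain rfl : a = c := le_antisymm hac (by omega)
    exact ⟨.nil, rfl⟩
  | succ d ih =>
    let a' : Fin (n i) := ⟨a + 1, by omega⟩
    have hadj : (pathForest b n).Adj ⟨i, a⟩ ⟨i, a'⟩ := ⟨rfl, Or.inl rfl⟩
    obtain ⟨w, hw⟩ := ih (a := a') (Fin.le_def.mpr (by simp only [a']; omega))
      (by simp only [a']; omega)
    exact ⟨.cons hadj w, by simp [hw]⟩

theorem pathForest_exists_walk_length_le (i : Fin b) (a c : Fin (n i)) {r : ℕ}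
    (hac : a ≤ c.val + r) (hca : c ≤ a.val + r) :
    ∃ w : (pathForest b n).Walk ⟨i, a⟩ ⟨i, c⟩, w.length ≤ r := by
  rcases le_total a c with h | h
  · obtain ⟨w, hw⟩ := pathForest_exists_walk_of_le i h
    exact ⟨w, by omega⟩
  · obtain ⟨w, hw⟩ := pathForest_exists_walk_of_le i h
    exact ⟨w.reverse, by rw [SimpleGraph.Walk.length_reverse]; omega⟩

theorem pathForest_exists_centre (i : Fin b) (hi : 0 < n i) (s r : ℕ) :
    ∃ c : Fin (n i), ∀ q : Fin (n i), s ≤ q → q < s + (2 * r + 1) →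
      ∃ w : (pathForest b n).Walk ⟨i, c⟩ ⟨i, q⟩, w.length ≤ r :=
  ⟨⟨min (s + r) (n i - 1), by omega⟩, fun q hsq hqs =>
    pathForest_exists_walk_length_le i _ q (by simp only; omega) (by simp only; omega)⟩

end pathForest

theorem stmt_13_general (b : ℕ) (n : Fin b → ℕ) (k : ℕ) (hk : 1 ≤ k)
    (S : Fin b → Finset ℕ)
    (hrange : ∀ i, ∀ j ∈ S i, j ≤ k - 1)
    (hdisj : ∀ i i' : Fin b, i ≠ i' → Disjoint (S i) (S i'))
    (hsum : ∀ i, n i ≤ ∑ j ∈ S i, (2 * j + 1)) :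
    BurnsIn (pathForest b n) k := by
  let start (i : Fin b) (t : ℕ) : ℕ := ∑ j ∈ S i with j < t, (2 * j + 1)
  refine burnsIn_of_cover _ k
    (fun t => {v | t ∈ S v.1 ∧ start v.1 t ≤ v.2 ∧ v.2 < start v.1 t + (2 * t + 1)}) ?_ ?_
  · rintro ⟨i, p⟩
    obtain ⟨t, ht, hp⟩ := Finset.exists_mem_sum_filter_lt_le_and_lt (fun j => 2 * j + 1) (S i)
      (p.isLt.trans_le (hsum i))
    exact ⟨t, by have := hrange i t ht; omega, ht, hp⟩
  · rintro t - ⟨⟨i, p⟩, hti, -⟩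
    obtain ⟨c, hc⟩ := pathForest_exists_centre i p.pos (start i t) t
    refine ⟨⟨i, c⟩, ?_⟩
    rintro ⟨i', q⟩ ⟨hti', hq⟩
    obtain rfl : i' = i := by
      by_contra hne
      exact Finset.disjoint_left.mp (hdisj i' i hne) hti' hti
    exact hc q hq.1 hq.2

theorem stmt_13 (b : ℕ) (n : Fin b → ℕ) (hn : ∀ i, 1 ≤ n i) (k : ℕ) (hk : 1 ≤ k)
    (S : Fin b → Finset ℕ)
    (hrange : ∀ i, ∀ j ∈ S i, j ≤ k - 1)
    (hdisj : ∀ i i' : Fin b, i ≠ i' → Disjoint (S i) (S i'))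
    (hsum : ∀ i, n i ≤ ∑ j ∈ S i, (2 * j + 1)) :
    BurnsIn (pathForest b n) k :=
  stmt_13_general b n k hk S hrange hdisj hsum
end

section
/- Let n_1,…,n_b be positive integers and k ≥ 2 an integer. If the path forest with path orders n_1,…,n_b can be burned in at most k−1 rounds, then there exist pairwise disjoint subsets S_1,…,S_b of {1,…,k−1} such that for every i, the sum over j ∈ S_i of 2j is at least n_i + 1 (equivalently, the sum over j ∈ S_i of j is at least ⌈(n_i+1)/2⌉). -/
theorem le_sum_of_forall_lt_exists_near {ι : Type*} (T : Finset ι) (c r : ι → ℕ) (N : ℕ)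
    (hcover : ∀ t < N, ∃ i ∈ T, c i ≤ t + r i ∧ t ≤ c i + r i) :
    N ≤ ∑ i ∈ T, (2 * r i + 1) := by
  have hsub : Finset.range N ⊆ T.biUnion fun i => Finset.Icc (c i - r i) (c i + r i) := by
    intro t ht
    obtain ⟨i, hi, hlo, hhi⟩ := hcover t (Finset.mem_range.mp ht)
    exact Finset.mem_biUnion.mpr ⟨i, hi, Finset.mem_Icc.mpr ⟨by omega, hhi⟩⟩
  calc N = (Finset.range N).card := (Finset.card_range N).symm
    _ ≤ _ := Finset.card_le_card hsub
    _ ≤ ∑ i ∈ T, (Finset.Icc (c i - r i) (c i + r i)).card := Finset.card_biUnion_le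
    _ ≤ ∑ i ∈ T, (2 * r i + 1) := Finset.sum_le_sum fun i _ => by rw [Nat.card_Icc]; omega

section PathForest

variable {b : ℕ} {n : Fin b → ℕ}

theorem pathForest_walk_bounds {u v : Σ i : Fin b, Fin (n i)} (w : (pathForest b n).Walk u v) :
    u.1 = v.1 ∧ u.2.val ≤ v.2.val + w.length ∧ v.2.val ≤ u.2.val + w.length := by
  induction w with
  | nil => simp
  | cons h w ih =>
    obtain ⟨hfst', hle, hge⟩ := ih
    have hstep := h.2
    rw [SimpleGraph.Walk.length_cons]
    exact ⟨h.1.trans hfst', by omega, by omega⟩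

theorem pathForest_dist_bounds {u v : Σ i : Fin b, Fin (n i)}
    (h : (pathForest b n).Reachable u v) :
    u.1 = v.1 ∧ u.2.val ≤ v.2.val + (pathForest b n).dist u v ∧
      v.2.val ≤ u.2.val + (pathForest b n).dist u v := by
  obtain ⟨w, hw⟩ := h.exists_walk_length_eq_dist
  exact hw ▸ pathForest_walk_bounds w

theorem le_sum_of_burning_schedule {m : ℕ} (x : Fin m → Σ i : Fin b, Fin (n i))
    (hx : ∀ v, ∃ i : Fin m,
      (pathForest b n).Reachable (x i) v ∧ (pathForest b n).dist (x i) v ≤ m - (i.val + 1))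
    (c : Fin b) :
    n c + (Finset.univ.filter fun i => (x i).1 = c).card ≤
      ∑ i ∈ Finset.univ.filter (fun i => (x i).1 = c), 2 * (m - i.val) := by
  set T := Finset.univ.filter fun i : Fin m => (x i).1 = c
  have hcover : n c ≤ ∑ i ∈ T, (2 * (m - (i.val + 1)) + 1) := by
    refine le_sum_of_forall_lt_exists_near T (fun i => (x i).2.val) _ _ fun t ht => ?_
    obtain ⟨i, hreach, hdist⟩ := hx ⟨c, ⟨t, ht⟩⟩
    obtain ⟨hfst, hle, hge⟩ := pathForest_dist_bounds hreach
    exact ⟨i, Finset.mem_filter.mpr ⟨Finset.mem_univ i, hfst⟩, by simp only at hle; omega,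
      by simp only at hge; omega⟩
  have hround : ∀ i ∈ T, 2 * (m - (i.val + 1)) + 1 + 1 = 2 * (m - i.val) := fun i _ => by
    have := i.isLt
    omega
  rw [← Finset.sum_congr rfl hround, Finset.sum_add_distrib, Finset.sum_const, smul_eq_mul,
    mul_one]
  omega

end PathForest

theorem stmt_14_general (b : ℕ) (n : Fin b → ℕ) (hn : ∀ i, 1 ≤ n i) (k : ℕ)
    (hburn : BurnsIn (pathForest b n) (k - 1)) :
    ∃ S : Fin b → Finset ℕ,
      (∀ i, ∀ j ∈ S i, 1 ≤ j ∧ j ≤ k - 1) ∧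
      (∀ i i' : Fin b, i ≠ i' → Disjoint (S i) (S i')) ∧
      ∀ i, n i + 1 ≤ ∑ j ∈ S i, 2 * j := by
  obtain ⟨m, hm, x, hx⟩ := hburn
  set T : Fin b → Finset (Fin m) := fun c => Finset.univ.filter fun i => (x i).1 = c
  have hinj : Function.Injective fun i : Fin m => m - i.val := fun i i' h => by
    have := i.isLt
    have := i'.isLt
    exact Fin.ext (by simp only at h; omega)
  refine ⟨fun c => (T c).image fun i => m - i.val, fun c j hj => ?_, fun c c' hne => ?_,
    fun c => ?_⟩
  · obtain ⟨i, -, rfl⟩ := Finset.mem_image.mp hj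
    have := i.isLt
    omega
  · exact (Finset.disjoint_image hinj).mpr
      (Finset.disjoint_filter.mpr fun i _ h h' => hne (h.symm.trans h'))
  · have hnonempty : (T c).Nonempty := by
      obtain ⟨i, hreach, -⟩ := hx ⟨c, ⟨0, hn c⟩⟩
      exact ⟨i, Finset.mem_filter.mpr
        ⟨Finset.mem_univ i, (pathForest_dist_bounds hreach).1⟩⟩
    rw [Finset.sum_image fun i _ i' _ h => hinj h]
    have hsum : n c + (T c).card ≤ ∑ i ∈ T c, 2 * (m - i.val) :=
      le_sum_of_burning_schedule x hx c
    have := hnonempty.card_pos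
    omega

theorem stmt_14 (b : ℕ) (n : Fin b → ℕ) (hn : ∀ i, 1 ≤ n i) (k : ℕ) (hk : 2 ≤ k)
    (hburn : BurnsIn (pathForest b n) (k - 1)) :
    ∃ S : Fin b → Finset ℕ,
      (∀ i, ∀ j ∈ S i, 1 ≤ j ∧ j ≤ k - 1) ∧
      (∀ i i' : Fin b, i ≠ i' → Disjoint (S i) (S i')) ∧
      ∀ i, n i + 1 ≤ ∑ j ∈ S i, 2 * j :=
  stmt_14_general b n hn k hburn
end
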